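/- On words of length n, for every letter a: ν_k ∘ sh_a − sh_a ∘ ν_k = (n + 2 − k)·sh_a ∘ ν_{k−1} + Σ_{b=1}^{n} sh_b ∘ θ_{b,a} ∘ ν_{k−1}, where the ν operators on the left of sh act on length-(n+1) words and those on the right act on length-n words. -/

import Mathlib

/-!
Let `E_k = ∑_{c : Fin k → A} sh_{c₁} ⋯ sh_{c_k} ∂_{c₁} ⋯ ∂_{c_k}` be the sum over all `k`-tuples.
Insertions commute with each other, and so do deletions, so each term only depends on the
multiset of letters, and summing over the orbit of a weakly increasing tuple gives
`E_k = k! ν_k`. Splitting off the first letter gives `E_{k+1} = ∑_b sh_b E_k ∂_b`.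

With `N` the length operator, the relations
`[∂_b, sh_a] = θ_{b,a} + δ_{ab} (N + 1)`, `[θ_{b,a}, sh_c] = δ_{bc} sh_a`,
`[∂_c, θ_{b,a}] = δ_{ac} ∂_b` and `[∂_c, N] = ∂_c` are checked by induction on words, peeling
off the first letter. They make every `E_k` commute with every `θ_{b,a}`, and an induction on `k`
through the recursion then gives
`[E_{k+1}, sh_a] = (k + 1) (sh_a E_k (N + 1 - k) + ∑_b sh_b θ_{b,a} E_k)`.
On words of length `n` the operator `N` is the scalar `n`.
-/

/-- Insertion operator: `shOp A a` sends a word `w` (basis element of the free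
`ℂ`-vector space on words) to the sum of the words obtained by inserting the
letter `a` at each of the `w.length + 1` possible positions. -/
noncomputable def shOp (A : Type) [DecidableEq A] (a : A) :
    (List A →₀ ℂ) →ₗ[ℂ] (List A →₀ ℂ) :=
  Finsupp.lift (List A →₀ ℂ) ℂ (List A)
    (fun w => ∑ i : Fin (w.length + 1), Finsupp.single (List.insertIdx w i a) 1)

/-- Deletion operator: `delOp A a` sends a word `w` to the sum, over all positions
`i` with `w_i = a`, of the word obtained by deleting position `i`. -/
noncomputable def delOp (A : Type) [DecidableEq A] (a : A) :
    (List A →₀ ℂ) →ₗ[ℂ] (List A →₀ ℂ) :=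
  Finsupp.lift (List A →₀ ℂ) ℂ (List A)
    (fun w => ∑ i : Fin w.length,
      if w.get i = a then Finsupp.single (w.eraseIdx i) 1 else 0)

/-- Replacement operator: `thetaOp A b a` sends a word `w` to the sum, over all
positions `i` with `w_i = b`, of the word obtained by replacing the letter at
position `i` by `a`. -/
noncomputable def thetaOp (A : Type) [DecidableEq A] (b a : A) :
    (List A →₀ ℂ) →ₗ[ℂ] (List A →₀ ℂ) :=
  Finsupp.lift (List A →₀ ℂ) ℂ (List A)
    (fun w => ∑ i : Fin w.length,
      if w.get i = b then Finsupp.single (w.set i a) 1 else 0)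


/-- Composition `sh_{a₁} ∘ sh_{a₂} ∘ ⋯ ∘ sh_{a_k}` of insertion operators along a list. -/
noncomputable def shChain (A : Type) [DecidableEq A] (l : List A) :
    (List A →₀ ℂ) →ₗ[ℂ] (List A →₀ ℂ) :=
  l.foldr (fun c f => (shOp A c).comp f) LinearMap.id

/-- Composition `∂_{a₁} ∘ ∂_{a₂} ∘ ⋯ ∘ ∂_{a_k}` of deletion operators along a list. -/
noncomputable def delChain (A : Type) [DecidableEq A] (l : List A) :
    (List A →₀ ℂ) →ₗ[ℂ] (List A →₀ ℂ) :=
  l.foldr (fun c f => (delOp A c).comp f) LinearMap.id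

open scoped Classical in
/-- The symmetrized shuffling operator
`ν_k = Σ_{1 ≤ a₁ ≤ ⋯ ≤ a_k ≤ n} (1/∏_j #{l : a_l = j}!) · sh_{a₁}∘⋯∘sh_{a_k}∘∂_{a₁}∘⋯∘∂_{a_k}`
on the word algebra over the alphabet `{1,…,n}` (here `Fin n`). -/
noncomputable def nuOp (n k : ℕ) :
    (List (Fin n) →₀ ℂ) →ₗ[ℂ] (List (Fin n) →₀ ℂ) :=
  ∑ a ∈ Finset.univ.filter (fun a : Fin k → Fin n => Monotone a),
    (((∏ j : Fin n,
        Nat.factorial ((Finset.univ.filter (fun l : Fin k => a l = j)).card) : ℕ) : ℂ))⁻¹ •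
      ((shChain (Fin n) (List.ofFn a)).comp (delChain (Fin n) (List.ofFn a)))

noncomputable def consOp (A : Type) (c : A) : Module.End ℂ (List A →₀ ℂ) :=
  Finsupp.lmapDomain ℂ ℂ (List.cons c)

noncomputable def lengthOp (A : Type) : Module.End ℂ (List A →₀ ℂ) :=
  Finsupp.lift (List A →₀ ℂ) ℂ (List A) fun w => (w.length : ℂ) • Finsupp.single w 1

section Relations

open Finsupp

variable {A : Type}

theorem consOp_single (c : A) (w : List A) (r : ℂ) :
    consOp A c (single w r) = single (c :: w) r := by
  simp [consOp]

theorem lengthOp_single (w : List A) :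
    lengthOp A (single w 1) = (w.length : ℂ) • single w 1 := by
  rw [lengthOp, lift_apply, sum_single_index] <;> simp

theorem wordOp_ext {F G : Module.End ℂ (List A →₀ ℂ)}
    (h : ∀ w, F (single w 1) = G (single w 1)) : F = G :=
  lhom_ext' fun w => LinearMap.ext_ring (h w)

theorem wordOp_ext_of_cons {F G : Module.End ℂ (List A →₀ ℂ)}
    (hnil : F (single [] 1) = G (single [] 1))
    (hcons : ∀ c x, F x = G x → F (consOp A c x) = G (consOp A c x)) : F = G := by
  refine wordOp_ext fun w => ?_
  induction w with
  | nil => exact hnil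
  | cons c w ih => simpa only [consOp_single] using hcons c _ ih

theorem lengthOp_single_nil : lengthOp A (single [] 1) = 0 := by
  simp [lengthOp_single]

theorem lengthOp_consOp (c : A) (x : List A →₀ ℂ) :
    lengthOp A (consOp A c x) = consOp A c (lengthOp A x) + consOp A c x := by
  suffices lengthOp A * consOp A c = consOp A c * lengthOp A + consOp A c from
    LinearMap.congr_fun this x
  refine wordOp_ext fun w => ?_
  simp [consOp_single, lengthOp_single, add_smul]

variable [DecidableEq A]

theorem shOp_single_nil (a : A) : shOp A a (single [] 1) = consOp A a (single [] 1) := by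
  simp [shOp, consOp_single]

theorem delOp_single_nil (b : A) : delOp A b (single [] 1) = 0 := by
  simp [delOp]

theorem thetaOp_single_nil (b a : A) : thetaOp A b a (single [] 1) = 0 := by
  simp [thetaOp]

theorem shOp_consOp (a c : A) (x : List A →₀ ℂ) :
    shOp A a (consOp A c x) = consOp A a (consOp A c x) + consOp A c (shOp A a x) := by
  suffices shOp A a * consOp A c = consOp A a * consOp A c + consOp A c * shOp A a from
    LinearMap.congr_fun this x
  refine wordOp_ext fun w => ?_
  simp [shOp, consOp_single, Fin.sum_univ_succ (n := w.length + 1), List.insertIdx]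

theorem delOp_consOp (b c : A) (x : List A →₀ ℂ) :
    delOp A b (consOp A c x) = (if c = b then x else 0) + consOp A c (delOp A b x) := by
  suffices delOp A b * consOp A c = (if c = b then 1 else 0) + consOp A c * delOp A b by
    simpa [apply_ite (fun f : Module.End ℂ (List A →₀ ℂ) => f x)] using
      LinearMap.congr_fun this x
  refine wordOp_ext fun w => ?_
  simp [delOp, consOp_single, Fin.sum_univ_succ (n := w.length), apply_ite (consOp A c)]
  split_ifs <;> simp

theorem thetaOp_consOp (b a c : A) (x : List A →₀ ℂ) :
    thetaOp A b a (consOp A c x)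
      = (if c = b then consOp A a x else 0) + consOp A c (thetaOp A b a x) := by
  suffices thetaOp A b a * consOp A c
      = (if c = b then consOp A a else 0) + consOp A c * thetaOp A b a by
    simpa [apply_ite (fun f : Module.End ℂ (List A →₀ ℂ) => f x)] using
      LinearMap.congr_fun this x
  refine wordOp_ext fun w => ?_
  simp [thetaOp, consOp_single, Fin.sum_univ_succ (n := w.length), apply_ite (consOp A c)]
  split_ifs <;> simp_all [consOp_single]

theorem shOp_commute (a b : A) : Commute (shOp A a) (shOp A b) := by
  refine wordOp_ext_of_cons ?_ fun c x ih => ?_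
  · simp only [Module.End.mul_apply, shOp_single_nil, shOp_consOp]
    abel
  · simp only [Module.End.mul_apply, shOp_consOp, map_add] at ih ⊢
    rw [ih]; abel

theorem delOp_commute (a b : A) : Commute (delOp A a) (delOp A b) := by
  refine wordOp_ext_of_cons ?_ fun c x ih => ?_
  · simp only [Module.End.mul_apply, delOp_single_nil, map_zero]
  · simp only [Module.End.mul_apply, delOp_consOp, map_add, apply_ite (delOp A _),
      map_zero] at ih ⊢
    rw [ih]; abel

/- Commutation relations are stated additively (`X * Y = Y * X + Z`): subtraction on
`Module.End ℂ (List A →₀ ℂ)` elaborates to `LinearMap`'s own instance, which ring lemmas such as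
`mul_sub` do not recognise. -/

theorem delOp_mul_shOp (b a : A) :
    delOp A b * shOp A a
      = shOp A a * delOp A b + thetaOp A b a + if b = a then lengthOp A + 1 else 0 := by
  split_ifs with hba
  all_goals
    refine wordOp_ext_of_cons ?_ fun c x ih => ?_
    · simp [shOp_single_nil, delOp_consOp, delOp_single_nil, thetaOp_single_nil,
        lengthOp_single_nil, hba, eq_comm (a := a)]
    · simp only [Module.End.mul_apply, LinearMap.add_apply, Module.End.one_apply,
        shOp_consOp, delOp_consOp, thetaOp_consOp, lengthOp_consOp, map_add] at ih ⊢
      rw [ih]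
      simp only [map_add, apply_ite (shOp A a), apply_ite (consOp A _), map_zero]
      split_ifs <;> subst_vars <;> (try contradiction) <;> abel

theorem thetaOp_mul_shOp (b a c : A) :
    thetaOp A b a * shOp A c = shOp A c * thetaOp A b a + if c = b then shOp A a else 0 := by
  split_ifs with hcb
  all_goals
    refine wordOp_ext_of_cons ?_ fun d x ih => ?_
    · simp [shOp_single_nil, thetaOp_consOp, thetaOp_single_nil, hcb]
    · simp only [Module.End.mul_apply, LinearMap.add_apply, shOp_consOp, thetaOp_consOp,
        map_add] at ih ⊢
      rw [ih]
      simp only [map_add, apply_ite (shOp A c), apply_ite (consOp A _), shOp_consOp, map_zero]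
      split_ifs <;> subst_vars <;> abel

theorem delOp_mul_thetaOp (c b a : A) :
    delOp A c * thetaOp A b a = thetaOp A b a * delOp A c + if c = a then delOp A b else 0 := by
  split_ifs with hca
  all_goals
    refine wordOp_ext_of_cons ?_ fun d x ih => ?_
    · simp [delOp_single_nil, thetaOp_single_nil]
    · simp only [Module.End.mul_apply, LinearMap.add_apply, delOp_consOp, thetaOp_consOp,
        map_add] at ih ⊢
      rw [ih]
      simp only [map_add, apply_ite (delOp A c), apply_ite (thetaOp A b a),
        delOp_consOp, map_zero]
      split_ifs <;> subst_vars <;> (try contradiction) <;> abel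

theorem delOp_mul_lengthOp (c : A) : delOp A c * lengthOp A = (lengthOp A + 1) * delOp A c := by
  refine wordOp_ext_of_cons ?_ fun d x ih => ?_
  · simp [delOp_single_nil, lengthOp_single_nil]
  · simp only [Module.End.mul_apply, LinearMap.add_apply, Module.End.one_apply, delOp_consOp,
      lengthOp_consOp, map_add] at ih ⊢
    rw [ih]
    simp only [apply_ite (lengthOp A), map_zero, map_add]
    abel

theorem lengthOp_add_smul_mul_delOp (r : ℂ) (c : A) :
    (lengthOp A + r • 1) * delOp A c = delOp A c * (lengthOp A + (r - 1) • 1) := by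
  rw [mul_add, delOp_mul_lengthOp, add_mul, add_mul, mul_smul_comm, smul_mul_assoc, one_mul,
    mul_one]
  module

end Relations

open scoped Nat

section Symmetrization

open Finset

variable {k : ℕ} {ι : Type*} [LinearOrder ι] [Fintype ι]

theorem card_perm_monotone_comp (c : Fin k → ι) :
    #{σ : Equiv.Perm (Fin k) | Monotone (c ∘ σ)} = ∏ i, (#{j | c j = i})! := by
  have hstab := DomMulAct.stabilizer_card c
  simp only [Fintype.card_subtype] at hstab
  rw [← hstab]
  refine card_equiv (Equiv.mulRight (Tuple.sort c)⁻¹) fun σ => ?_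
  simp only [mem_filter, mem_univ, true_and, Equiv.coe_mulRight,
    ← Tuple.comp_sort_eq_comp_iff_monotone]
  constructor
  · intro h; ext j; simpa using congrFun h ((Tuple.sort c)⁻¹ j)
  · intro h; ext j; simpa using congrFun h (Tuple.sort c j)

open scoped Classical in
theorem sum_monotone_factorial_smul {M : Type*} [AddCommMonoid M] (G : (Fin k → ι) → M)
    (hG : ∀ c (σ : Equiv.Perm (Fin k)), G (c ∘ σ) = G c) :
    ∑ a with Monotone a, k ! • G a = ∑ c, (∏ i, (#{j | c j = i})!) • G c := by
  calc ∑ a with Monotone a, k ! • G a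
      = ∑ σ : Equiv.Perm (Fin k), ∑ a with Monotone a, G (a ∘ ⇑σ⁻¹) := by
        rw [sum_comm]
        simp [hG, Fintype.card_perm]
    _ = ∑ σ : Equiv.Perm (Fin k), ∑ c with Monotone (c ∘ σ), G c := by
        refine sum_congr rfl fun σ _ => ?_
        simp only [sum_filter]
        refine Fintype.sum_equiv (Equiv.arrowCongr σ (Equiv.refl ι)) _ _ fun a => ?_
        have hσ : (a ∘ ⇑σ.symm) ∘ ⇑σ = a := by ext; simp
        simp [Equiv.arrowCongr, hσ]
    _ = ∑ c, #{σ : Equiv.Perm (Fin k) | Monotone (c ∘ σ)} • G c := by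
        simp only [sum_filter]
        rw [sum_comm]
        simp only [← sum_filter, sum_const]
    _ = ∑ c, (∏ i, (#{j | c j = i})!) • G c := by
        simp only [card_perm_monotone_comp]

end Symmetrization

section Chains

variable {A : Type} [DecidableEq A]

theorem shChain_cons (c : A) (l : List A) : shChain A (c :: l) = shOp A c * shChain A l := rfl

theorem delChain_cons (c : A) (l : List A) : delChain A (c :: l) = delOp A c * delChain A l := rfl

theorem shChain_eq_prod (l : List A) : shChain A l = (l.map (shOp A)).prod := by
  induction l with
  | nil => rfl
  | cons c l ih => rw [List.map_cons, List.prod_cons, ← ih, shChain_cons]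

theorem delChain_eq_prod (l : List A) : delChain A l = (l.map (delOp A)).prod := by
  induction l with
  | nil => rfl
  | cons c l ih => rw [List.map_cons, List.prod_cons, ← ih, delChain_cons]

theorem shChain_perm {l l' : List A} (h : l.Perm l') : shChain A l = shChain A l' := by
  rw [shChain_eq_prod, shChain_eq_prod]
  exact (h.map _).prod_eq' (List.pairwise_map.mpr (List.pairwise_of_forall shOp_commute))

theorem delChain_perm {l l' : List A} (h : l.Perm l') : delChain A l = delChain A l' := by
  rw [delChain_eq_prod, delChain_eq_prod]
  exact (h.map _).prod_eq' (List.pairwise_map.mpr (List.pairwise_of_forall delOp_commute))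

theorem delOp_commute_delChain (b : A) (l : List A) : Commute (delOp A b) (delChain A l) := by
  rw [delChain_eq_prod]
  exact Commute.list_prod_right _ _ fun f hf => by
    obtain ⟨c, -, rfl⟩ := List.mem_map.mp hf
    exact delOp_commute b c

end Chains

noncomputable def shDelMap (A : Type) [Fintype A] [DecidableEq A] :
    Module.End ℂ (Module.End ℂ (List A →₀ ℂ)) :=
  ∑ b, LinearMap.mulLeft ℂ (shOp A b) ∘ₗ LinearMap.mulRight ℂ (delOp A b)

noncomputable def shDelSum (A : Type) [Fintype A] [DecidableEq A] (k : ℕ) :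
    Module.End ℂ (List A →₀ ℂ) :=
  ∑ c : Fin k → A, shChain A (List.ofFn c) * delChain A (List.ofFn c)

section ShDelSum

variable {A : Type} [Fintype A] [DecidableEq A]

theorem shDelMap_apply (X : Module.End ℂ (List A →₀ ℂ)) :
    shDelMap A X = ∑ b, shOp A b * X * delOp A b := by
  simp [shDelMap, mul_assoc]

theorem shDelSum_zero : shDelSum A 0 = 1 := by
  simp [shDelSum, shChain, delChain, ← Module.End.one_eq_id]

theorem shDelSum_succ (k : ℕ) :
    shDelSum A (k + 1) = shDelMap A (shDelSum A k) := by
  rw [shDelMap_apply, shDelSum, ← (Fin.consEquiv fun _ => A).sum_comp, Fintype.sum_prod_type]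
  simp only [Fin.consEquiv_apply, List.ofFn_succ, Fin.cons_zero, Fin.cons_succ, shChain_cons,
    delChain_cons, shDelSum, Finset.mul_sum, Finset.sum_mul]
  refine Finset.sum_congr rfl fun b _ => Finset.sum_congr rfl fun d _ => ?_
  rw [(delOp_commute_delChain b _).eq, mul_assoc, mul_assoc, mul_assoc]

end ShDelSum

open scoped Classical in
theorem factorial_smul_nuOp (n k : ℕ) : k ! • nuOp n k = shDelSum (Fin n) k := by
  rw [nuOp, Finset.smul_sum, sum_monotone_factorial_smul, shDelSum]
  · refine Finset.sum_congr rfl fun c _ => ?_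
    rw [← Nat.cast_smul_eq_nsmul ℂ,
      smul_inv_smul₀ (by simp [Finset.prod_ne_zero_iff, Nat.factorial_ne_zero])]
    rfl
  · intro c σ
    have hmult : ∀ i, (Finset.univ.filter fun j => (c ∘ σ) j = i).card
        = (Finset.univ.filter fun j => c j = i).card := fun i =>
      Finset.card_equiv σ fun j => by simp
    simp only [hmult, shChain_perm (σ.ofFn_comp_perm c), delChain_perm (σ.ofFn_comp_perm c)]

section Commutator

variable {A : Type} [Fintype A] [DecidableEq A]

noncomputable def shThetaOp (A : Type) [Fintype A] [DecidableEq A] (a : A) :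
    Module.End ℂ (List A →₀ ℂ) :=
  ∑ b, shOp A b * thetaOp A b a

theorem shThetaOp_mul_shOp (a b : A) :
    shThetaOp A a * shOp A b = shOp A b * shThetaOp A a + shOp A b * shOp A a := by
  have hterm : ∀ c, shOp A c * thetaOp A c a * shOp A b
      = shOp A b * (shOp A c * thetaOp A c a) + if b = c then shOp A b * shOp A a else 0 := by
    intro c
    rw [mul_assoc, thetaOp_mul_shOp, mul_add, ← mul_assoc, (shOp_commute c b).eq, mul_assoc]
    split_ifs with hbc
    · rw [hbc]
    · rw [mul_zero]
  simp only [shThetaOp, Finset.sum_mul, Finset.mul_sum, hterm, Finset.sum_add_distrib,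
    Finset.sum_ite_eq, Finset.mem_univ, if_true]

theorem shDelMap_shOp_mul (a : A) (X : Module.End ℂ (List A →₀ ℂ)) :
    shDelMap A (shOp A a * X) = shOp A a * shDelMap A X := by
  simp only [shDelMap_apply, Finset.mul_sum, ← mul_assoc, (shOp_commute a _).eq]

theorem shDelMap_mul_lengthOp_add_smul (r : ℂ) (X : Module.End ℂ (List A →₀ ℂ)) :
    shDelMap A (X * (lengthOp A + r • 1))
      = shDelMap A X * (lengthOp A + (r - 1) • 1) := by
  simp only [shDelMap_apply, Finset.sum_mul, mul_assoc, lengthOp_add_smul_mul_delOp]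

theorem shThetaOp_mul_shDelMap (a : A) (X : Module.End ℂ (List A →₀ ℂ)) :
    shThetaOp A a * shDelMap A X = shDelMap A (shThetaOp A a * X) + shOp A a * shDelMap A X := by
  simp only [shDelMap_apply, Finset.mul_sum, ← Finset.sum_add_distrib]
  refine Finset.sum_congr rfl fun b _ => ?_
  rw [← mul_assoc, ← mul_assoc, shThetaOp_mul_shOp, (shOp_commute b a).eq]
  simp only [add_mul, mul_assoc]

theorem thetaOp_mul_shDelMap (b a : A) (X : Module.End ℂ (List A →₀ ℂ)) :
    thetaOp A b a * shDelMap A X = shDelMap A (thetaOp A b a * X) + shOp A a * X * delOp A b := by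
  simp only [shDelMap_apply, Finset.mul_sum, ← mul_assoc, thetaOp_mul_shOp, add_mul, ite_mul,
    zero_mul, Finset.sum_add_distrib, Finset.sum_ite_eq', Finset.mem_univ, if_true]

theorem shDelMap_mul_thetaOp (b a : A) (X : Module.End ℂ (List A →₀ ℂ)) :
    shDelMap A X * thetaOp A b a = shDelMap A (X * thetaOp A b a) + shOp A a * X * delOp A b := by
  simp only [shDelMap_apply, Finset.sum_mul, mul_assoc, delOp_mul_thetaOp, mul_add, mul_ite,
    mul_zero, Finset.sum_add_distrib, Finset.sum_ite_eq', Finset.mem_univ, if_true]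

theorem shDelMap_mul_shOp (a : A) (X : Module.End ℂ (List A →₀ ℂ)) :
    shDelMap A X * shOp A a = shDelMap A (X * shOp A a) + ∑ b, shOp A b * X * thetaOp A b a
      + shOp A a * X * (lengthOp A + 1) := by
  simp only [shDelMap_apply, Finset.sum_mul, mul_assoc, delOp_mul_shOp, mul_add, mul_ite,
    mul_zero, Finset.sum_add_distrib, Finset.sum_ite_eq', Finset.mem_univ, if_true]

theorem shDelSum_commute_thetaOp (k : ℕ) (b a : A) : Commute (shDelSum A k) (thetaOp A b a) := by
  induction k with
  | zero => rw [shDelSum_zero]; exact Commute.one_left _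
  | succ k ih =>
    rw [Commute, SemiconjBy, shDelSum_succ, shDelMap_mul_thetaOp, thetaOp_mul_shDelMap, ih.eq]

theorem shDelSum_succ_mul_shOp (k : ℕ) (a : A) :
    shDelSum A (k + 1) * shOp A a
      = shOp A a * shDelSum A (k + 1) + ((k : ℂ) + 1) •
          (shOp A a * shDelSum A k * (lengthOp A + (1 - k : ℂ) • 1)
            + shThetaOp A a * shDelSum A k) := by
  induction k with
  | zero =>
    rw [shDelSum_succ, shDelSum_zero, shDelMap_mul_shOp, one_mul, ← mul_one (shOp A a),
      shDelMap_shOp_mul]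
    simp only [mul_one, shThetaOp, Nat.cast_zero, zero_add, sub_zero, one_smul]
    abel
  | succ k ih =>
    have hTheta : ∑ b, shOp A b * shDelSum A (k + 1) * thetaOp A b a
        = shThetaOp A a * shDelSum A (k + 1) := by
      simp only [shThetaOp, Finset.sum_mul, mul_assoc, (shDelSum_commute_thetaOp _ _ _).eq]
    rw [shDelSum_succ (k + 1), shDelMap_mul_shOp, ih, hTheta, map_add, map_smul, map_add,
      shDelMap_shOp_mul, shDelMap_mul_lengthOp_add_smul, shDelMap_shOp_mul,
      ← shDelSum_succ, shDelSum_succ k, shThetaOp_mul_shDelMap]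
    simp only [mul_add, mul_smul_comm, mul_one]
    push_cast
    module

end Commutator

theorem nuOp_succ_mul_shOp (n k : ℕ) (a : Fin n) :
    nuOp n (k + 1) * shOp (Fin n) a
      = shOp (Fin n) a * nuOp n (k + 1)
        + (shOp (Fin n) a * nuOp n k * (lengthOp (Fin n) + (1 - k : ℂ) • 1)
          + shThetaOp (Fin n) a * nuOp n k) := by
  have hE : ∀ j, shDelSum (Fin n) j = (j ! : ℂ) • nuOp n j := fun j => by
    rw [← factorial_smul_nuOp, Nat.cast_smul_eq_nsmul]
  have key := shDelSum_succ_mul_shOp k a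
  rw [hE, hE, smul_mul_assoc, mul_smul_comm, mul_smul_comm, smul_mul_assoc, mul_smul_comm,
    ← smul_add, smul_smul,
    show ((k : ℂ) + 1) * k ! = (k + 1)! by push_cast [Nat.factorial_succ]; ring, ← smul_add] at key
  exact smul_right_injective _ (Nat.cast_ne_zero.mpr (Nat.factorial_ne_zero _)) key

/-- On words of length `n`, for every letter `a`:
`ν_k ∘ sh_a − sh_a ∘ ν_k = (n+2−k)·sh_a ∘ ν_{k−1} + Σ_{b=1}^{n} sh_b ∘ θ_{b,a} ∘ ν_{k−1}`. -/
theorem nu_sh_commutator (n k : ℕ) (hk : 1 ≤ k) (a : Fin n)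
    (w : List (Fin n)) (hw : w.length = n) :
    nuOp n k (shOp (Fin n) a (Finsupp.single w 1))
        - shOp (Fin n) a (nuOp n k (Finsupp.single w 1))
      = ((n : ℂ) + 2 - (k : ℂ)) • shOp (Fin n) a (nuOp n (k-1) (Finsupp.single w 1))
        + ∑ b : Fin n,
            shOp (Fin n) b (thetaOp (Fin n) b a (nuOp n (k-1) (Finsupp.single w 1))) := by
  obtain ⟨k, rfl⟩ : ∃ j, k = j + 1 := ⟨k - 1, by omega⟩
  have hlen : (lengthOp (Fin n) + (1 - k : ℂ) • 1) (Finsupp.single w 1)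
      = ((n : ℂ) + 2 - ((k + 1 : ℕ) : ℂ)) • Finsupp.single w 1 := by
    rw [LinearMap.add_apply, lengthOp_single, hw, LinearMap.smul_apply, Module.End.one_apply,
      ← add_smul]
    congr 1
    push_cast
    ring
  have hcomm := LinearMap.congr_fun (nuOp_succ_mul_shOp n k a) (Finsupp.single w 1)
  simp only [Module.End.mul_apply, LinearMap.add_apply, hlen, map_smul, shThetaOp,
    LinearMap.sum_apply] at hcomm
  rw [Nat.add_sub_cancel, hcomm, add_sub_cancel_left]
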